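/- arXiv:2405.13886 — 3 statements merged into one kernel-verified Lean document; each statement's English description precedes it below -/
import Mathlib

section
/- (Trade-off bound, averaged form) Let τ_β = e^{-βH}/Z on H_B, let {p_x} be a probability distribution and {ρ_x} density matrices on H_B with Σ_x p_x ρ_x = τ_β, and let {U_x} be arbitrary unitaries with extracted energies E_x = Tr(H(ρ_x - U_x ρ_x U_x†)). Then Σ_x p_x (S(ρ_x) + β E_x) ≤ S(τ_β). -/
/-!
Since `U_x ρ_x U_x†` is a state with the entropy of `ρ_x`, the Gibbs variational principle
`S(σ) - β Tr(H σ) ≤ log Z` bounds the `x`-th term by `log Z + β Tr(H ρ_x)`. Averaging, the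
energies add up to `Tr(H τ_β)`, and `log Z + β Tr(H τ_β) = S(τ_β)`.

The variational principle is proved in an eigenbasis `(w_i)` of `σ`, with eigenvalues `q_i`.
Writing `h_i = ⟨w_i, H w_i⟩`, it is the classical Gibbs inequality
`∑ -q_i log q_i - β ∑ q_i h_i ≤ log ∑ e^{-β h_i}` followed by Peierls' inequality
`∑ e^{-β h_i} ≤ Tr e^{-βH}`. Peierls' inequality is Jensen's inequality for the doubly
stochastic weights `|⟨v_j, w_i⟩|²`, where `(v_j)` is an eigenbasis of `H`.
-/

open Matrix BigOperators Finset
open scoped Kronecker ComplexOrder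

noncomputable section

variable {n : Type*} [Fintype n] [DecidableEq n]

/-- Functional calculus for Hermitian matrices (junk value `0` otherwise). -/
def matFun (f : ℝ → ℝ) (A : Matrix n n ℂ) : Matrix n n ℂ :=
  if hA : A.IsHermitian then
    (hA.eigenvectorUnitary : Matrix n n ℂ) *
      Matrix.diagonal (fun i => (f (hA.eigenvalues i) : ℂ)) *
      star (hA.eigenvectorUnitary : Matrix n n ℂ)
  else 0

/-- Von Neumann entropy (natural log). -/
def vnEntropy (A : Matrix n n ℂ) : ℝ :=
  if hA : A.IsHermitian then ∑ i, Real.negMulLog (hA.eigenvalues i) else 0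

/-- Umegaki relative entropy `Tr ρ (log ρ - log σ)`. -/
def relEnt (ρ σ : Matrix n n ℂ) : ℝ :=
  ((ρ * (matFun Real.log ρ - matFun Real.log σ)).trace).re

/-- Partition function `Z = Tr e^{-βH}`. -/
def gibbsZ (β : ℝ) (H : Matrix n n ℂ) : ℝ :=
  ((matFun (fun x => Real.exp (-(β * x))) H).trace).re

/-- Gibbs (thermal) state `e^{-βH}/Z`. -/
def gibbs (β : ℝ) (H : Matrix n n ℂ) : Matrix n n ℂ :=
  ((gibbsZ β H : ℂ)⁻¹) • matFun (fun x => Real.exp (-(β * x))) H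

/-- Density matrix predicate. -/
def IsDensity (ρ : Matrix n n ℂ) : Prop := ρ.PosSemidef ∧ ρ.trace = 1

def IsUnitaryMat (U : Matrix n n ℂ) : Prop := U ∈ Matrix.unitaryGroup n ℂ

/-- Outer product `|v⟩⟨v|`. -/
def outer {m : Type*} (v : m → ℂ) : Matrix m m ℂ :=
  Matrix.of fun i j => v i * (starRingEnd ℂ) (v j)

/-- Unnormalized maximally entangled vector `∑ₓ |x⟩|x⟩`. -/
def maxEnt (d : ℕ) : Fin d × Fin d → ℂ := fun p => if p.1 = p.2 then 1 else 0

/-- Positive square root of a Hermitian matrix (via eigenvalues). -/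
def matSqrt (A : Matrix n n ℂ) : Matrix n n ℂ := matFun Real.sqrt A

/-- Partial trace over the first tensor factor. -/
def ptraceFst {m k : Type*} [Fintype m] (ρ : Matrix (m × k) (m × k) ℂ) : Matrix k k ℂ :=
  Matrix.of fun j1 j2 => ∑ i, ρ (i, j1) (i, j2)

/-- Partial trace over the second tensor factor. -/
def ptraceSnd {m k : Type*} [Fintype k] (ρ : Matrix (m × k) (m × k) ℂ) : Matrix m m ℂ :=
  Matrix.of fun i1 i2 => ∑ j, ρ (i1, j) (i2, j)

namespace Real

lemma negMulLog_add_mul_log_le {q u : ℝ} (hq : 0 ≤ q) (hu : 0 < u) :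
    negMulLog q + q * log u ≤ u - q := by
  rcases hq.eq_or_lt with rfl | hq
  · simpa using hu.le
  have h := mul_le_mul_of_nonneg_left (log_le_sub_one_of_pos (div_pos hu hq)) hq.le
  rw [log_div hu.ne' hq.ne', mul_sub_one, mul_div_cancel₀ _ hq.ne'] at h
  rw [negMulLog]
  linarith

lemma sum_negMulLog_add_sum_mul_le_log_sum_exp {ι : Type*} [Fintype ι] {q a : ι → ℝ}
    (hq0 : ∀ i, 0 ≤ q i) (hq1 : ∑ i, q i = 1) :
    ∑ i, negMulLog (q i) + ∑ i, q i * a i ≤ log (∑ i, exp (a i)) := by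
  set Z := ∑ i, exp (a i)
  have hZ : 0 < Z := by
    rcases isEmpty_or_nonempty ι with hι | hι
    · simp at hq1
    · exact Finset.sum_pos (fun i _ => exp_pos (a i)) univ_nonempty
  have key := Finset.sum_le_sum fun i (_ : i ∈ univ) =>
    negMulLog_add_mul_log_le (hq0 i) (div_pos (exp_pos (a i)) hZ)
  simp only [log_div (exp_ne_zero _) hZ.ne', log_exp, mul_sub, Finset.sum_add_distrib,
    Finset.sum_sub_distrib, ← Finset.sum_mul, ← Finset.sum_div, hq1] at key
  linarith [div_self hZ.ne']

end Real

namespace Matrix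

lemma sum_normSq_apply_left_eq_one {P : Matrix n n ℂ} (hP : P ∈ unitaryGroup n ℂ) (i : n) :
    ∑ j, Complex.normSq (P j i) = 1 := by
  have h := congrFun (congrFun (mem_unitaryGroup_iff'.mp hP) i) i
  rw [mul_apply, one_apply_eq] at h
  exact_mod_cast (by simpa [Complex.normSq_eq_conj_mul_self] using h :
    ((∑ j, Complex.normSq (P j i) : ℝ) : ℂ) = 1)

lemma sum_normSq_apply_right_eq_one {P : Matrix n n ℂ} (hP : P ∈ unitaryGroup n ℂ) (j : n) :
    ∑ i, Complex.normSq (P j i) = 1 := by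
  simpa using sum_normSq_apply_left_eq_one (Unitary.star_mem hP) j

lemma trace_mul_conj_diagonal (B W : Matrix n n ℂ) (d : n → ℂ) :
    (B * (W * diagonal d * star W)).trace = ∑ i, d i * (star W * B * W) i i := by
  rw [← mul_assoc, ← mul_assoc, trace_mul_cycle, ← mul_assoc, trace_mul_comm]
  simp [trace, diagonal_mul, mul_assoc]

end Matrix

namespace Matrix.IsHermitian

variable {A H : Matrix n n ℂ}

lemma matFun_eq_cfc (hA : A.IsHermitian) (f : ℝ → ℝ) : matFun f A = cfc f A := by
  rw [matFun, dif_pos hA, cfc_eq hA, IsHermitian.cfc, Unitary.conjStarAlgAut_apply]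
  rfl

lemma map_eigenvalues_cfc (hA : A.IsHermitian) (f : ℝ → ℝ) (hB : (cfc f A).IsHermitian) :
    univ.val.map hB.eigenvalues = univ.val.map (f ∘ hA.eigenvalues) := by
  apply Multiset.map_injective Complex.ofReal_injective
  have := hB.roots_charpoly_eq_eigenvalues
  rw [charpoly_cfc_eq hA, Polynomial.roots_prod _ _ (by
    simp [Finset.prod_ne_zero_iff, Polynomial.X_sub_C_ne_zero])] at this
  simpa [Multiset.map_map, Function.comp_def] using this.symm

lemma sum_eigenvalues_cfc (hA : A.IsHermitian) (f g : ℝ → ℝ) (hB : (cfc f A).IsHermitian) :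
    ∑ i, g (hB.eigenvalues i) = ∑ i, g (f (hA.eigenvalues i)) := by
  simpa only [Multiset.map_map, Finset.sum_map_val, Function.comp_apply] using
    congrArg (fun s => (s.map g).sum) (hA.map_eigenvalues_cfc f hB)

lemma trace_cfc (hA : A.IsHermitian) (f : ℝ → ℝ) :
    (cfc f A).trace = ∑ i, (f (hA.eigenvalues i) : ℂ) := by
  have hB : (cfc f A).IsHermitian := cfc_predicate f A
  rw [hB.trace_eq_sum_eigenvalues]
  simpa using congrArg Complex.ofReal (hA.sum_eigenvalues_cfc f (fun x => x) hB)

lemma re_diag_unitary_conj (hH : H.IsHermitian) (W : Matrix n n ℂ) (i : n) :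
    ((star W * H * W) i i).re =
      ∑ j, Complex.normSq ((star (hH.eigenvectorUnitary : Matrix n n ℂ) * W) j i) *
        hH.eigenvalues j := by
  set P := star (hH.eigenvectorUnitary : Matrix n n ℂ) * W
  have hconj : star W * H * W = star P * diagonal (fun j => (hH.eigenvalues j : ℂ)) * P := by
    conv_lhs => rw [hH.spectral_theorem, Unitary.conjStarAlgAut_apply]
    simp only [P, star_mul, star_star, mul_assoc]
    rfl
  rw [hconj, mul_apply, Complex.re_sum]
  refine Finset.sum_congr rfl fun j _ => ?_
  rw [mul_diagonal, star_apply, Complex.star_def, mul_right_comm,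
    ← Complex.normSq_eq_conj_mul_self]
  simp

lemma sum_convexOn_diag_unitary_conj_le (hH : H.IsHermitian) {W : Matrix n n ℂ}
    (hW : W ∈ unitaryGroup n ℂ) {f : ℝ → ℝ} (hf : ConvexOn ℝ Set.univ f) :
    ∑ i, f ((star W * H * W) i i).re ≤ ∑ j, f (hH.eigenvalues j) := by
  set P := star (hH.eigenvectorUnitary : Matrix n n ℂ) * W
  have hP : P ∈ unitaryGroup n ℂ := mul_mem (Unitary.star_mem (SetLike.coe_mem _)) hW
  calc ∑ i, f ((star W * H * W) i i).re
      = ∑ i, f (∑ j, Complex.normSq (P j i) • hH.eigenvalues j) := by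
        simp only [hH.re_diag_unitary_conj, smul_eq_mul, P]
    _ ≤ ∑ i, ∑ j, Complex.normSq (P j i) • f (hH.eigenvalues j) :=
        Finset.sum_le_sum fun i _ => hf.map_sum_le (fun j _ => Complex.normSq_nonneg _)
          (sum_normSq_apply_left_eq_one hP i) (fun j _ => Set.mem_univ _)
    _ = ∑ j, f (hH.eigenvalues j) := by
        rw [Finset.sum_comm]
        simp only [smul_eq_mul, ← Finset.sum_mul, sum_normSq_apply_right_eq_one hP, one_mul]

end Matrix.IsHermitian

lemma vnEntropy_cfc {A : Matrix n n ℂ} (hA : A.IsHermitian) (f : ℝ → ℝ) :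
    vnEntropy (cfc f A) = ∑ i, Real.negMulLog (f (hA.eigenvalues i)) := by
  have hB : (cfc f A).IsHermitian := cfc_predicate f A
  rw [vnEntropy, dif_pos hB, hA.sum_eigenvalues_cfc f _ hB]

section Gibbs

variable {H : Matrix n n ℂ}

lemma gibbsZ_eq_sum_exp (hH : H.IsHermitian) (β : ℝ) :
    gibbsZ β H = ∑ j, Real.exp (-(β * hH.eigenvalues j)) := by
  rw [gibbsZ, hH.matFun_eq_cfc, hH.trace_cfc, ← Complex.ofReal_sum, Complex.ofReal_re]

lemma gibbsZ_pos [Nonempty n] (hH : H.IsHermitian) (β : ℝ) : 0 < gibbsZ β H := by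
  rw [gibbsZ_eq_sum_exp hH]
  exact Finset.sum_pos (fun j _ => Real.exp_pos _) univ_nonempty

lemma gibbs_eq_cfc (hH : H.IsHermitian) (β : ℝ) :
    gibbs β H = cfc (fun x => (gibbsZ β H)⁻¹ * Real.exp (-(β * x))) H := by
  rw [gibbs, hH.matFun_eq_cfc, cfc_const_mul _ (fun x => Real.exp (-(β * x))) H,
    ← Complex.ofReal_inv, Complex.coe_smul]

lemma vnEntropy_gibbs [Nonempty n] (hH : H.IsHermitian) (β : ℝ) :
    vnEntropy (gibbs β H) = Real.log (gibbsZ β H) + β * ((H * gibbs β H).trace).re := by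
  have hZ := gibbsZ_pos hH β
  have hmul : H * gibbs β H
      = cfc (fun x => x * ((gibbsZ β H)⁻¹ * Real.exp (-(β * x)))) H := by
    rw [gibbs_eq_cfc hH, cfc_mul (fun x => x) _ H, cfc_id' ℝ H]
  rw [hmul, hH.trace_cfc, ← Complex.ofReal_sum, Complex.ofReal_re, gibbs_eq_cfc hH,
    vnEntropy_cfc hH]
  set Z := gibbsZ β H
  set t := fun j => Z⁻¹ * Real.exp (-(β * hH.eigenvalues j))
  have hsum : ∑ j, t j = 1 := by
    rw [← Finset.mul_sum, ← gibbsZ_eq_sum_exp hH, inv_mul_cancel₀ hZ.ne']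
  have hterm : ∀ j, Real.negMulLog (t j) = t j * Real.log Z + β * (hH.eigenvalues j * t j) := by
    intro j
    rw [Real.negMulLog, Real.log_mul (inv_ne_zero hZ.ne') (Real.exp_ne_zero _), Real.log_inv,
      Real.log_exp]
    ring
  change ∑ j, Real.negMulLog (t j) = Real.log Z + β * ∑ j, hH.eigenvalues j * t j
  simp only [hterm, Finset.sum_add_distrib, ← Finset.sum_mul, hsum, ← Finset.mul_sum, one_mul]

end Gibbs

lemma vnEntropy_unitary_conj {A U : Matrix n n ℂ} (hA : A.IsHermitian)
    (hU : U ∈ unitaryGroup n ℂ) : vnEntropy (U * A * star U) = vnEntropy A := by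
  have hB : (U * A * star U).IsHermitian := isHermitian_mul_mul_conjTranspose U hA
  have heig : hB.eigenvalues = hA.eigenvalues := by
    rw [hB.eigenvalues_eq_eigenvalues_iff hA, charpoly_mul_comm, ← mul_assoc,
      mem_unitaryGroup_iff'.mp hU, one_mul]
  rw [vnEntropy, vnEntropy, dif_pos hB, dif_pos hA, heig]

namespace IsDensity

variable {ρ : Matrix n n ℂ}

omit [DecidableEq n] in
lemma nonempty (hρ : IsDensity ρ) : Nonempty n := by
  by_contra h
  have : IsEmpty n := not_nonempty_iff.mp h
  simpa [trace] using hρ.2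

lemma sum_eigenvalues (hρ : IsDensity ρ) : ∑ i, hρ.1.1.eigenvalues i = 1 := by
  have h := hρ.2
  rw [hρ.1.1.trace_eq_sum_eigenvalues] at h
  simpa using congrArg Complex.re h

lemma unitary_conj (hρ : IsDensity ρ) {U : Matrix n n ℂ} (hU : U ∈ unitaryGroup n ℂ) :
    IsDensity (U * ρ * star U) :=
  ⟨hρ.1.mul_mul_conjTranspose_same U, by
    rw [trace_mul_cycle, mem_unitaryGroup_iff'.mp hU, one_mul, hρ.2]⟩

lemma vnEntropy_sub_mul_energy_le (hρ : IsDensity ρ) {H : Matrix n n ℂ} (hH : H.IsHermitian)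
    (β : ℝ) : vnEntropy ρ - β * ((H * ρ).trace).re ≤ Real.log (gibbsZ β H) := by
  have := hρ.nonempty
  set hρH := hρ.1.1
  set W := (hρH.eigenvectorUnitary : Matrix n n ℂ)
  set q := hρH.eigenvalues
  set h := fun i => ((star W * H * W) i i).re
  have henergy : ((H * ρ).trace).re = ∑ i, q i * h i := by
    conv_lhs => rw [hρH.spectral_theorem, Unitary.conjStarAlgAut_apply]
    simp [trace_mul_conj_diagonal, q, h, W]
  have hclassical := Real.sum_negMulLog_add_sum_mul_le_log_sum_exp (a := fun i => -(β * h i))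
    hρ.1.eigenvalues_nonneg hρ.sum_eigenvalues
  have hpeierls : ∑ i, Real.exp (-(β * h i)) ≤ ∑ j, Real.exp (-(β * hH.eigenvalues j)) :=
    hH.sum_convexOn_diag_unitary_conj_le (f := fun x => Real.exp (-(β * x)))
      (SetLike.coe_mem _) (by simpa [Function.comp_def, neg_mul] using
        convexOn_exp.comp_linearMap ((-β) • LinearMap.id (R := ℝ) (M := ℝ)))
  have hlog := Real.log_le_log (Finset.sum_pos (fun i _ => Real.exp_pos _) univ_nonempty)
    hpeierls
  rw [← gibbsZ_eq_sum_exp hH] at hlog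
  have hvn : vnEntropy ρ = ∑ i, Real.negMulLog (q i) := dif_pos hρH
  simp only [mul_neg, Finset.sum_neg_distrib, mul_left_comm _ β, ← Finset.mul_sum] at hclassical
  rw [hvn, henergy]
  linarith

end IsDensity

theorem averaged_tradeoff_bound_general {d : ℕ} {ι : Type*} [Fintype ι]
    (H : Matrix (Fin d) (Fin d) ℂ) (hH : H.IsHermitian) (β : ℝ)
    (p : ι → ℝ) (hp0 : ∀ x, 0 ≤ p x) (hp1 : ∑ x, p x = 1)
    (ρ : ι → Matrix (Fin d) (Fin d) ℂ) (hρ : ∀ x, IsDensity (ρ x))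
    (U : ι → Matrix (Fin d) (Fin d) ℂ) (hU : ∀ x, IsUnitaryMat (U x))
    (havg : ∑ x, (p x : ℂ) • ρ x = gibbs β H) :
    ∑ x, p x * (vnEntropy (ρ x)
        + β * ((H * (ρ x - U x * ρ x * star (U x))).trace).re)
      ≤ vnEntropy (gibbs β H) := by
  obtain ⟨x₀⟩ : Nonempty ι := by
    by_contra h
    simp [not_nonempty_iff.mp h] at hp1
  have : Nonempty (Fin d) := (hρ x₀).nonempty
  have hfree : ∀ x, vnEntropy (ρ x) - β * ((H * (U x * ρ x * star (U x))).trace).re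
      ≤ Real.log (gibbsZ β H) := fun x => by
    simpa only [vnEntropy_unitary_conj (hρ x).1.1 (hU x)] using
      ((hρ x).unitary_conj (hU x)).vnEntropy_sub_mul_energy_le hH β
  have henergy : ∑ x, p x * ((H * ρ x).trace).re = ((H * gibbs β H).trace).re := by
    simp [← havg, mul_sum, trace_sum, Complex.re_sum]
  calc ∑ x, p x * (vnEntropy (ρ x) + β * ((H * (ρ x - U x * ρ x * star (U x))).trace).re)
      = ∑ x, p x * (vnEntropy (ρ x) - β * ((H * (U x * ρ x * star (U x))).trace).re)
          + β * ∑ x, p x * ((H * ρ x).trace).re := by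
        rw [mul_sum, ← sum_add_distrib]
        refine sum_congr rfl fun x _ => ?_
        rw [mul_sub, trace_sub, Complex.sub_re]
        ring
    _ ≤ ∑ x, p x * Real.log (gibbsZ β H) + β * ((H * gibbs β H).trace).re := by
        rw [henergy]
        gcongr with x
        · exact hp0 x
        · exact hfree x
    _ = vnEntropy (gibbs β H) := by rw [← sum_mul, hp1, one_mul, vnEntropy_gibbs hH]

/-- averaged trade-off bound: any ensemble averaging to the
thermal state obeys `Σ_x p_x (S(ρ_x) + β E_x) ≤ S(τ_β)`. -/
theorem averaged_tradeoff_bound {d : ℕ} {ι : Type*} [Fintype ι]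
    (H : Matrix (Fin d) (Fin d) ℂ) (hH : H.IsHermitian) (β : ℝ) (hβ : 0 < β)
    (p : ι → ℝ) (hp0 : ∀ x, 0 ≤ p x) (hp1 : ∑ x, p x = 1)
    (ρ : ι → Matrix (Fin d) (Fin d) ℂ) (hρ : ∀ x, IsDensity (ρ x))
    (U : ι → Matrix (Fin d) (Fin d) ℂ) (hU : ∀ x, IsUnitaryMat (U x))
    (havg : ∑ x, (p x : ℂ) • ρ x = gibbs β H) :
    ∑ x, p x * (vnEntropy (ρ x)
        + β * ((H * (ρ x - U x * ρ x * star (U x))).trace).re)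
      ≤ vnEntropy (gibbs β H) :=
  averaged_tradeoff_bound_general H hH β p hp0 hp1 ρ hρ U hU havg

end
end

section
/- (Bell-measurement saturation) In the setting of Theorem 1 with dim H_A = dim H_{A'} = dim H_B = d and |Φ⟩_{A'R} = d^{-1/2}|𝕀⟩_{A'R}, if Alice measures the generalized Bell basis on AA' (rank-one projectors onto (𝕀 ⊗ W_x)|𝕀⟩/√d for the d² Heisenberg–Weyl unitaries W_x), then each post-measurement state on B equals τ_β, so S(B) = S(τ_β), and zero energy is extracted (E = 0); hence the bound S(B) + βE ≤ S(τ_β) is saturated. -/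
open Matrix BigOperators Finset
open scoped Kronecker ComplexOrder

noncomputable section

variable {n : Type*} [Fintype n] [DecidableEq n]

/-!
Write the thermal field double as `∑ T a b |a⟩|b⟩` and the `A'R` state as `∑ Φ a' r |a'⟩|r⟩`.
Projecting `AA'` onto the Bell vector `d^{-1/2} (𝕀 ⊗ U)|𝕀⟩` of a unitary `U` leaves `BR` in the
state with coefficient matrix `d^{-1/2} Tᵀ U† Φ` (a teleportation identity). For `Φ = d^{-1/2} 𝕀`
its `B`-marginal is `d⁻² Tᵀ (Tᵀ)†` because `U† U = 1`: it does not depend on the outcome. For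
`T = diag √(e^{-βE}/Z)` this is `τ_β / d²`, so every outcome has probability `1/d²` and leaves Bob
in `τ_β`; the conditional unitaries are trivial, so no energy is extracted.
-/

section PartialTrace

variable {m k : Type*}

lemma trace_outer [Fintype m] (v : m → ℂ) : (outer v).trace = star v ⬝ᵥ v := by
  simp only [trace, outer, diag_apply, of_apply, dotProduct, Pi.star_apply, RCLike.star_def,
    mul_comm]

lemma trace_ptraceFst [Fintype m] [Fintype k] (ρ : Matrix (m × k) (m × k) ℂ) :
    (ptraceFst ρ).trace = ρ.trace := by
  simp only [trace, ptraceFst, diag_apply, of_apply, Fintype.sum_prod_type]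
  exact Finset.sum_comm

lemma trace_ptraceSnd [Fintype m] [Fintype k] (ρ : Matrix (m × k) (m × k) ℂ) :
    (ptraceSnd ρ).trace = ρ.trace := by
  simp only [trace, ptraceSnd, diag_apply, of_apply, Fintype.sum_prod_type]

lemma ptraceFst_outer_mul [Fintype m] (v : m → ℂ) (u : k → ℂ) :
    ptraceFst (outer fun q : m × k => v q.1 * u q.2) = (star v ⬝ᵥ v) • outer u := by
  ext j₁ j₂
  simp only [ptraceFst, outer, of_apply, Matrix.smul_apply, smul_eq_mul, dotProduct,
    Finset.sum_mul, Pi.star_apply, RCLike.star_def, map_mul]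
  exact Finset.sum_congr rfl fun _ _ => by ring

lemma ptraceSnd_outer_uncurry [Fintype k] (M : Matrix m k ℂ) :
    ptraceSnd (outer (Function.uncurry M)) = M * Mᴴ := by
  ext i₁ i₂
  simp only [ptraceSnd, outer, of_apply, mul_apply, conjTranspose_apply, RCLike.star_def]
  rfl

lemma kronecker_one_mulVec_outer [Fintype m] [Fintype k] [DecidableEq k] (v : m → ℂ)
    (ψ : m × k → ℂ) :
    (outer v ⊗ₖ (1 : Matrix k k ℂ)) *ᵥ ψ = fun q => v q.1 * (star v ⬝ᵥ fun i => ψ (i, q.2)) := by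
  ext ⟨i, j⟩
  simp [mulVec, dotProduct, outer, Fintype.sum_prod_type, one_apply, Finset.mul_sum, mul_assoc]

end PartialTrace

lemma one_kronecker_mulVec_maxEnt {d : ℕ} (M : Matrix (Fin d) (Fin d) ℂ) :
    (1 ⊗ₖ M) *ᵥ maxEnt d = fun q => M q.2 q.1 := by
  ext ⟨a, a'⟩
  simp [mulVec, dotProduct, maxEnt, Fintype.sum_prod_type, one_apply]

lemma conjTranspose_mul_self_of_monomial {m : Type*} [Fintype m] [DecidableEq m]
    {α : Type*} [Semiring α] [StarRing α] {σ : m → m} (hσ : σ.Injective) (c : m → α)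
    (hc : ∀ j, star (c j) * c j = 1) :
    (of fun i j => if i = σ j then c j else 0)ᴴ * (of fun i j => if i = σ j then c j else 0) =
      1 := by
  ext j₁ j₂
  simp only [mul_apply, conjTranspose_apply, of_apply, one_apply]
  split_ifs with h
  · subst h; simp [hc]
  · refine Finset.sum_eq_zero fun i _ => ?_
    split_ifs <;> simp_all [hσ.eq_iff]

lemma weyl_conjTranspose_mul_self {d : ℕ} (hd : d ≠ 0) (a b : Fin d) :
    (of fun i j : Fin d =>
        if i = j + a then Complex.exp (2 * Real.pi * Complex.I / d) ^ ((b : ℕ) * (j : ℕ)) else 0)ᴴ *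
      (of fun i j : Fin d =>
        if i = j + a then Complex.exp (2 * Real.pi * Complex.I / d) ^ ((b : ℕ) * (j : ℕ)) else 0)
      = 1 := by
  refine conjTranspose_mul_self_of_monomial (add_left_injective a) _ fun j => ?_
  rw [RCLike.star_def, Complex.conj_mul', norm_pow,
    (Complex.isPrimitiveRoot_exp d hd).norm'_eq_one hd]
  simp

lemma diagonal_comp_mul_eq_mul_diagonal_comp {m k : Type*} [Fintype m] [Fintype k]
    [DecidableEq m] [DecidableEq k] {c : m → ℝ} {e : k → ℝ} {U : Matrix m k ℂ}
    (h : diagonal (fun j => (c j : ℂ)) * U = U * diagonal (fun i => (e i : ℂ))) (f : ℝ → ℝ) :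
    diagonal (fun j => (f (c j) : ℂ)) * U = U * diagonal (fun i => (f (e i) : ℂ)) := by
  ext j i
  have hji := congr_fun (congr_fun h j) i
  simp only [diagonal_mul, mul_diagonal] at hji ⊢
  rcases eq_or_ne (U j i) 0 with hU | hU
  · simp [hU]
  · have hce : c j = e i := by exact_mod_cast mul_right_cancel₀ hU (hji.trans (mul_comm _ _))
    rw [hce, mul_comm]

lemma Matrix.IsHermitian.mul_eigenvectorUnitary {A : Matrix n n ℂ} (hA : A.IsHermitian) :
    A * hA.eigenvectorUnitary =
      hA.eigenvectorUnitary * diagonal fun i => (hA.eigenvalues i : ℂ) := by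
  rw [congrArg (· * (hA.eigenvectorUnitary : Matrix n n ℂ)) hA.spectral_theorem,
    Unitary.conjStarAlgAut_apply, mul_assoc, Unitary.coe_star_mul_self, mul_one]
  rfl

lemma matFun_diagonal (f : ℝ → ℝ) (c : n → ℝ) :
    matFun f (diagonal fun i => (c i : ℂ)) = diagonal fun i => (f (c i) : ℂ) := by
  have hA : (diagonal fun i => (c i : ℂ)).IsHermitian :=
    isHermitian_diagonal_iff.mpr fun i => Complex.conj_ofReal (c i)
  rw [matFun, dif_pos hA,
    ← diagonal_comp_mul_eq_mul_diagonal_comp hA.mul_eigenvectorUnitary, mul_assoc,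
    Unitary.mul_star_self_of_mem hA.eigenvectorUnitary.2, mul_one]

lemma gibbs_diagonal (β : ℝ) (E : n → ℝ) :
    gibbs β (diagonal fun i => (E i : ℂ)) =
      diagonal fun i => ((Real.exp (-(β * E i)) / ∑ j, Real.exp (-(β * E j)) : ℝ) : ℂ) := by
  rw [gibbs, gibbsZ, matFun_diagonal, trace_diagonal, ← Complex.ofReal_sum, Complex.ofReal_re,
    ← diagonal_smul]
  congr 1
  ext i
  simp [div_eq_inv_mul]

lemma trace_gibbs_diagonal [Nonempty n] (β : ℝ) (E : n → ℝ) :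
    (gibbs β (diagonal fun i => (E i : ℂ))).trace = 1 := by
  have hZ : 0 < ∑ j, Real.exp (-(β * E j)) :=
    Finset.sum_pos (fun _ _ => Real.exp_pos _) Finset.univ_nonempty
  rw [gibbs_diagonal, trace_diagonal, ← Complex.ofReal_sum, ← Finset.sum_div, div_self hZ.ne',
    Complex.ofReal_one]

lemma diagonal_sqrt_transpose_mul_conjTranspose {t : n → ℝ} (ht : ∀ i, 0 ≤ t i) :
    (diagonal fun i => (Real.sqrt (t i) : ℂ))ᵀ * (diagonal fun i => (Real.sqrt (t i) : ℂ))ᵀᴴ =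
      diagonal fun i => (t i : ℂ) := by
  rw [diagonal_transpose, diagonal_conjTranspose, diagonal_mul_diagonal]
  congr 1
  ext i
  rw [Pi.star_apply, RCLike.star_def, Complex.conj_ofReal, ← Complex.ofReal_mul,
    Real.mul_self_sqrt (ht i)]

def bellVec {d : ℕ} (U : Matrix (Fin d) (Fin d) ℂ) : Fin d × Fin d → ℂ :=
  ((Real.sqrt d)⁻¹ : ℂ) • ((1 ⊗ₖ U) *ᵥ maxEnt d)

lemma bellVec_apply {d : ℕ} (U : Matrix (Fin d) (Fin d) ℂ) (q : Fin d × Fin d) :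
    bellVec U q = (Real.sqrt d : ℂ)⁻¹ * U q.2 q.1 := by
  simp [bellVec, one_kronecker_mulVec_maxEnt]

lemma star_sqrt_inv_mul_self (d : ℕ) :
    star ((Real.sqrt d : ℂ)⁻¹) * (Real.sqrt d : ℂ)⁻¹ = (d : ℂ)⁻¹ := by
  rw [RCLike.star_def, Complex.conj_inv, Complex.conj_ofReal, ← mul_inv, ← Complex.ofReal_mul,
    Real.mul_self_sqrt d.cast_nonneg, Complex.ofReal_natCast]

lemma star_bellVec_dotProduct_self {d : ℕ} (hd : d ≠ 0) {U : Matrix (Fin d) (Fin d) ℂ}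
    (hU : Uᴴ * U = 1) : star (bellVec U) ⬝ᵥ bellVec U = 1 := by
  have htrace : ∑ a, ∑ a', star (U a' a) * U a' a = d := by
    simpa [trace, mul_apply] using congrArg trace hU
  simp only [dotProduct, Pi.star_apply, bellVec_apply, star_mul', Fintype.sum_prod_type]
  simp_rw [mul_mul_mul_comm _ _ (Real.sqrt d : ℂ)⁻¹, star_sqrt_inv_mul_self, ← Finset.mul_sum,
    htrace]
  exact inv_mul_cancel₀ (Nat.cast_ne_zero.mpr hd)

lemma star_bellVec_dotProduct {d : ℕ} (U T Φ : Matrix (Fin d) (Fin d) ℂ) (b r : Fin d) :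
    (star (bellVec U) ⬝ᵥ fun i => T i.1 b * Φ i.2 r) =
      (Real.sqrt d : ℂ)⁻¹ * (Tᵀ * Uᴴ * Φ) b r := by
  simp only [dotProduct, Pi.star_apply, bellVec_apply, star_mul', mul_apply, transpose_apply,
    conjTranspose_apply, Fintype.sum_prod_type, Finset.mul_sum, Finset.sum_mul]
  rw [Finset.sum_comm]
  refine Finset.sum_congr rfl fun _ _ => Finset.sum_congr rfl fun _ _ => ?_
  simp only [RCLike.star_def, Complex.conj_inv, Complex.conj_ofReal]
  ring

lemma ptraceSnd_ptraceFst_bellProjection_mulVec {d : ℕ} (hd : d ≠ 0)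
    {U : Matrix (Fin d) (Fin d) ℂ} (hU : Uᴴ * U = 1) (T : Matrix (Fin d) (Fin d) ℂ) :
    ptraceSnd (ptraceFst (outer ((outer (bellVec U) ⊗ₖ (1 : Matrix (Fin d × Fin d) _ ℂ)) *ᵥ
        fun q : (Fin d × Fin d) × (Fin d × Fin d) =>
          T q.1.1 q.2.1 * (((Real.sqrt d)⁻¹ : ℂ) • (1 : Matrix (Fin d) (Fin d) ℂ)) q.1.2 q.2.2)))
      = ((d : ℂ) ^ 2)⁻¹ • (Tᵀ * (Tᵀ)ᴴ) := by
  set c : ℂ := (Real.sqrt d : ℂ)⁻¹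
  have hreduced : (fun q : (Fin d × Fin d) × (Fin d × Fin d) =>
      bellVec U q.1 * (star (bellVec U) ⬝ᵥ fun i => T i.1 q.2.1 * (c • 1 : Matrix _ _ ℂ) i.2 q.2.2))
      = fun q => bellVec U q.1 *
          Function.uncurry (c • (Tᵀ * Uᴴ * (c • 1)) : Matrix (Fin d) (Fin d) ℂ) q.2 := by
    ext q
    rw [star_bellVec_dotProduct]
    rfl
  rw [kronecker_one_mulVec_outer, hreduced, ptraceFst_outer_mul,
    star_bellVec_dotProduct_self hd hU, one_smul, ptraceSnd_outer_uncurry]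
  simp only [conjTranspose_smul, conjTranspose_mul, conjTranspose_conjTranspose,
    Matrix.mul_smul, Matrix.smul_mul, smul_smul, mul_one, Matrix.mul_assoc]
  rw [← Matrix.mul_assoc Uᴴ, hU, Matrix.one_mul]
  congr 1
  rw [star_mul', mul_mul_mul_comm, star_sqrt_inv_mul_self, ← mul_inv, sq]

theorem bell_measurement_saturation_general {d : ℕ} (hd : 0 < d)
    (En : Fin d → ℝ) (β : ℝ)
    (Ham : Matrix (Fin d) (Fin d) ℂ)
    (hHam : Ham = Matrix.diagonal fun x => (En x : ℂ))
    (Z : ℝ) (hZ : Z = ∑ x, Real.exp (-(β * En x)))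
    -- thermal field double state on A ⊗ B (in the energy eigenbasis)
    (tfd : Fin d × Fin d → ℂ)
    (htfd : tfd = fun q =>
      if q.1 = q.2 then (Real.sqrt (Real.exp (-(β * En q.1)) / Z) : ℂ) else 0)
    -- maximally entangled state on A' ⊗ R
    (Phi : Fin d × Fin d → ℂ)
    (hPhi : Phi = fun q => if q.1 = q.2 then ((Real.sqrt d)⁻¹ : ℂ) else 0)
    -- initial global state, indexed by (A × A') × (B × R)
    (ψ : (Fin d × Fin d) × (Fin d × Fin d) → ℂ)
    (hψ : ψ = fun q => tfd (q.1.1, q.2.1) * Phi (q.1.2, q.2.2))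
    -- Heisenberg–Weyl unitaries and the Bell projectors
    (ω : ℂ) (hω : ω = Complex.exp (2 * Real.pi * Complex.I / d))
    (W : Fin d × Fin d → Matrix (Fin d) (Fin d) ℂ)
    (hW : ∀ a b : Fin d, W (a, b) =
      Matrix.of fun i j => if i = j + a then ω ^ ((b : ℕ) * (j : ℕ)) else 0)
    (P : Fin d × Fin d → Matrix (Fin d × Fin d) (Fin d × Fin d) ℂ)
    (hP : ∀ x, P x = outer
      (((Real.sqrt d)⁻¹ : ℂ) • (((1 : Matrix (Fin d) (Fin d) ℂ) ⊗ₖ W x) *ᵥ maxEnt d)))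
    (w : Fin d × Fin d → (Fin d × Fin d) × (Fin d × Fin d) → ℂ)
    (hw : ∀ x, w x =
      (P x ⊗ₖ (1 : Matrix (Fin d × Fin d) (Fin d × Fin d) ℂ)) *ᵥ ψ)
    (p : Fin d × Fin d → ℝ) (hp : ∀ x, p x = (star (w x) ⬝ᵥ w x).re)
    (ρ : Fin d × Fin d → Matrix (Fin d) (Fin d) ℂ)
    (hρ : ∀ x, ρ x = ((p x : ℂ))⁻¹ • ptraceSnd (ptraceFst (outer (w x)))) :
    (∀ x, p x = ((d : ℝ) ^ 2)⁻¹) ∧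
    (∀ x, ρ x = gibbs β Ham) ∧
    (∑ x, p x * vnEntropy (ρ x)
      + β * ∑ x, p x *
          ((Ham * (ρ x - (1 : Matrix (Fin d) (Fin d) ℂ) * ρ x *
            star (1 : Matrix (Fin d) (Fin d) ℂ))).trace).re
      = vnEntropy (gibbs β Ham)) := by
  have : Nonempty (Fin d) := ⟨⟨0, hd⟩⟩
  have hZ_nonneg : 0 ≤ Z := hZ ▸ Finset.sum_nonneg fun _ _ => (Real.exp_pos _).le
  have hgibbs : gibbs β Ham = diagonal fun b => ((Real.exp (-(β * En b)) / Z : ℝ) : ℂ) := by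
    rw [hHam, gibbs_diagonal, hZ]
  have hψ_tensor : ψ = fun q => diagonal (fun b => (Real.sqrt (Real.exp (-(β * En b)) / Z) : ℂ))
      q.1.1 q.2.1 * (((Real.sqrt d)⁻¹ : ℂ) • (1 : Matrix (Fin d) (Fin d) ℂ)) q.1.2 q.2.2 := by
    subst hψ htfd hPhi
    ext q
    simp [diagonal_apply, one_apply]
  have hW_unitary : ∀ x, (W x)ᴴ * W x = 1 := by
    rintro ⟨a, b⟩
    rw [hW, hω]
    exact weyl_conjTranspose_mul_self hd.ne' a b
  have hbob : ∀ x, ptraceSnd (ptraceFst (outer (w x))) = ((d : ℂ) ^ 2)⁻¹ • gibbs β Ham := by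
    intro x
    rw [hw, hP, hψ_tensor]
    refine (ptraceSnd_ptraceFst_bellProjection_mulVec hd.ne' (hW_unitary x) _).trans ?_
    rw [diagonal_sqrt_transpose_mul_conjTranspose fun _ => div_nonneg (Real.exp_pos _).le hZ_nonneg,
      hgibbs]
  have hprob : ∀ x, p x = ((d : ℝ) ^ 2)⁻¹ := by
    intro x
    rw [hp, ← trace_outer, ← trace_ptraceFst, ← trace_ptraceSnd, hbob, trace_smul, hHam,
      trace_gibbs_diagonal, smul_eq_mul, mul_one, ← Complex.ofReal_natCast, ← Complex.ofReal_pow,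
      ← Complex.ofReal_inv, Complex.ofReal_re]
  have hstate : ∀ x, ρ x = gibbs β Ham := by
    intro x
    rw [hρ, hbob, hprob, smul_smul]
    push_cast
    rw [inv_mul_cancel₀ (by simp [hd.ne']), one_smul]
  refine ⟨hprob, hstate, ?_⟩
  simp only [hprob, hstate, star_one, Matrix.one_mul, Matrix.mul_one, sub_self,
    trace_zero, Complex.zero_re, mul_zero, Finset.sum_const_zero, add_zero, Finset.sum_const,
    Finset.card_univ, Fintype.card_prod, Fintype.card_fin, nsmul_eq_mul]
  rw [← mul_assoc, Nat.cast_mul, ← sq, mul_inv_cancel₀ (by positivity), one_mul]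

/-- Bell-measurement saturation: measuring the generalized Bell
basis on `AA'` leaves Bob in `τ_β` with probability `1/d²` for each outcome,
so `S(B) = S(τ_β)` and (with trivial conditional unitaries) `E = 0`,
saturating the trade-off bound. -/
theorem bell_measurement_saturation {d : ℕ} (hd : 0 < d)     
    (En : Fin d → ℝ) (β : ℝ) (hβ : 0 < β)
    (Ham : Matrix (Fin d) (Fin d) ℂ)
    (hHam : Ham = Matrix.diagonal fun x => (En x : ℂ))
    (Z : ℝ) (hZ : Z = ∑ x, Real.exp (-(β * En x)))
    -- thermal field double state on A ⊗ B (in the energy eigenbasis)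
    (tfd : Fin d × Fin d → ℂ)
    (htfd : tfd = fun q =>
      if q.1 = q.2 then (Real.sqrt (Real.exp (-(β * En q.1)) / Z) : ℂ) else 0)
    -- maximally entangled state on A' ⊗ R
    (Phi : Fin d × Fin d → ℂ)
    (hPhi : Phi = fun q => if q.1 = q.2 then ((Real.sqrt d)⁻¹ : ℂ) else 0)
    -- initial global state, indexed by (A × A') × (B × R)
    (ψ : (Fin d × Fin d) × (Fin d × Fin d) → ℂ)
    (hψ : ψ = fun q => tfd (q.1.1, q.2.1) * Phi (q.1.2, q.2.2))
    -- Heisenberg–Weyl unitaries and the Bell projectors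
    (ω : ℂ) (hω : ω = Complex.exp (2 * Real.pi * Complex.I / d))
    (W : Fin d × Fin d → Matrix (Fin d) (Fin d) ℂ)
    (hW : ∀ a b : Fin d, W (a, b) =
      Matrix.of fun i j => if i = j + a then ω ^ ((b : ℕ) * (j : ℕ)) else 0)
    (P : Fin d × Fin d → Matrix (Fin d × Fin d) (Fin d × Fin d) ℂ)
    (hP : ∀ x, P x = outer
      (((Real.sqrt d)⁻¹ : ℂ) • (((1 : Matrix (Fin d) (Fin d) ℂ) ⊗ₖ W x) *ᵥ maxEnt d)))
    (w : Fin d × Fin d → (Fin d × Fin d) × (Fin d × Fin d) → ℂ)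
    (hw : ∀ x, w x =
      (P x ⊗ₖ (1 : Matrix (Fin d × Fin d) (Fin d × Fin d) ℂ)) *ᵥ ψ)
    (p : Fin d × Fin d → ℝ) (hp : ∀ x, p x = (star (w x) ⬝ᵥ w x).re)
    (ρ : Fin d × Fin d → Matrix (Fin d) (Fin d) ℂ)
    (hρ : ∀ x, ρ x = ((p x : ℂ))⁻¹ • ptraceSnd (ptraceFst (outer (w x)))) :
    (∀ x, p x = ((d : ℝ) ^ 2)⁻¹) ∧
    (∀ x, ρ x = gibbs β Ham) ∧
    (∑ x, p x * vnEntropy (ρ x)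
      + β * ∑ x, p x *
          ((Ham * (ρ x - (1 : Matrix (Fin d) (Fin d) ℂ) * ρ x *
            star (1 : Matrix (Fin d) (Fin d) ℂ))).trace).re
      = vnEntropy (gibbs β Ham)) :=
  bell_measurement_saturation_general hd En β Ham hHam Z hZ tfd htfd Phi hPhi ψ hψ ω hω W hW P hP w
    hw p hp ρ hρ

end
end

section
/- (Passivity of Gibbs states) Let H be a Hermitian operator on a finite-dimensional Hilbert space and β > 0. The Gibbs state τ_β = e^{-βH}/Tr e^{-βH} is passive: for every unitary U, Tr(H U τ_β U†) ≥ Tr(H τ_β). -/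
open Matrix BigOperators Finset
open scoped Kronecker ComplexOrder

noncomputable section

variable {n : Type*} [Fintype n] [DecidableEq n]

/-! In an eigenbasis `V` of `H`, the energy of `U τ_β U⋆` is
`Z⁻¹ ∑ᵢⱼ λᵢ |Wᵢⱼ|² e^{-βλⱼ}` with `W = V⋆ U V`, and for `U = 1` it is `Z⁻¹ ∑ⱼ λⱼ e^{-βλⱼ}`.
The weights `|Wᵢⱼ|²` of a unitary form a doubly stochastic matrix. Averaging the tangent-line
bound `e^{-βλⱼ} - e^{-βλᵢ} ≤ β (λᵢ - λⱼ) e^{-βλⱼ}` against these weights, the left side sums to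
zero and the right side is `β Z` times the energy gained: this is the classical shadow of
`S(U τ_β U⋆ ‖ τ_β) ≥ 0`. -/

namespace Matrix

theorem normSq_mem_doublyStochastic {W : Matrix n n ℂ} (hW : W ∈ unitaryGroup n ℂ) :
    (of fun i j => Complex.normSq (W i j)) ∈ doublyStochastic ℝ n := by
  refine mem_doublyStochastic_iff_sum.mpr
    ⟨fun i j => Complex.normSq_nonneg _, fun i => ?_, fun j => ?_⟩
  · have h := congrFun₂ (mem_unitaryGroup_iff.mp hW) i i
    simp only [mul_apply, star_apply, Complex.star_def, Complex.mul_conj, one_apply_eq] at h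
    exact_mod_cast h
  · have h := congrFun₂ (mem_unitaryGroup_iff'.mp hW) j j
    simp only [mul_apply, star_apply, Complex.star_def, mul_comm (starRingEnd ℂ _),
      Complex.mul_conj, one_apply_eq] at h
    exact_mod_cast h

theorem trace_conj_mul_conj {m : Type*} [Fintype m] (V A B U : Matrix m m ℂ) :
    (V * A * star V * (U * (V * B * star V) * star U)).trace =
      (A * (star V * U * V * B * star (star V * U * V))).trace := by
  simp only [star_mul, star_star, Matrix.mul_assoc]
  rw [trace_mul_comm]
  simp only [Matrix.mul_assoc]

theorem trace_diagonal_mul_conj_diagonal (a b : n → ℝ) (W : Matrix n n ℂ) :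
    (diagonal (fun i => (a i : ℂ)) * (W * diagonal (fun j => (b j : ℂ)) * star W)).trace =
      ((∑ i, ∑ j, a i * Complex.normSq (W i j) * b j : ℝ) : ℂ) := by
  push_cast
  refine Finset.sum_congr rfl fun i _ => ?_
  rw [diag_apply, diagonal_mul, mul_apply, Finset.mul_sum]
  refine Finset.sum_congr rfl fun j _ => ?_
  rw [mul_diagonal, star_apply, Complex.star_def, ← Complex.mul_conj]
  ring

end Matrix

section ExpInequality

open Real

theorem exp_sub_exp_le_mul_exp (β x y : ℝ) :
    exp (-(β * y)) - exp (-(β * x)) ≤ β * (x - y) * exp (-(β * y)) := by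
  have h := mul_le_mul_of_nonneg_left (add_one_le_exp (β * (y - x))) (exp_pos (-(β * y))).le
  rw [← exp_add, show -(β * y) + β * (y - x) = -(β * x) by ring] at h
  linarith

theorem sum_mul_exp_le_of_mem_doublyStochastic {B : Matrix n n ℝ}
    (hB : B ∈ doublyStochastic ℝ n) (E : n → ℝ) {β : ℝ} (hβ : 0 < β) :
    ∑ j, E j * exp (-(β * E j)) ≤ ∑ i, ∑ j, E i * B i j * exp (-(β * E j)) := by
  set e : n → ℝ := fun j => exp (-(β * E j))
  have hzero : ∑ i, ∑ j, B i j * (e j - e i) = 0 := by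
    simp only [mul_sub, Finset.sum_sub_distrib, ← Finset.sum_mul,
      sum_row_of_mem_doublyStochastic hB, one_mul]
    rw [Finset.sum_comm]
    simp only [← Finset.sum_mul, sum_col_of_mem_doublyStochastic hB, one_mul, sub_self]
  have hle : ∑ i, ∑ j, B i j * (e j - e i) ≤ ∑ i, ∑ j, B i j * (β * (E i - E j) * e j) :=
    Finset.sum_le_sum fun i _ => Finset.sum_le_sum fun j _ =>
      mul_le_mul_of_nonneg_left (exp_sub_exp_le_mul_exp β (E i) (E j))
        (nonneg_of_mem_doublyStochastic hB)
  have hrhs : ∑ i, ∑ j, B i j * (β * (E i - E j) * e j) =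
      β * (∑ i, ∑ j, E i * B i j * e j - ∑ j, E j * e j) := by
    simp only [mul_sub, sub_mul, Finset.sum_sub_distrib, Finset.mul_sum]
    congr 1
    · exact Finset.sum_congr rfl fun i _ => Finset.sum_congr rfl fun j _ => by ring
    · rw [Finset.sum_comm]
      refine Finset.sum_congr rfl fun j _ => ?_
      rw [← sum_mul, sum_col_of_mem_doublyStochastic hB, one_mul, mul_assoc]
  rw [hzero, hrhs] at hle
  linarith [nonneg_of_mul_nonneg_right hle hβ]

end ExpInequality

section Gibbs

variable {H : Matrix n n ℂ}

theorem matFun_eq_conj_diagonal (hH : H.IsHermitian) (f : ℝ → ℝ) :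
    matFun f H = hH.eigenvectorUnitary * diagonal (fun i => (f (hH.eigenvalues i) : ℂ)) *
      star (hH.eigenvectorUnitary : Matrix n n ℂ) :=
  dif_pos hH

theorem gibbsZ_eq_sum (hH : H.IsHermitian) (β : ℝ) :
    gibbsZ β H = ∑ i, Real.exp (-(β * hH.eigenvalues i)) := by
  rw [gibbsZ, matFun_eq_conj_diagonal hH, trace_mul_cycle,
    Unitary.star_mul_self_of_mem hH.eigenvectorUnitary.2, Matrix.one_mul, trace_diagonal]
  simp only [Complex.re_sum, Complex.ofReal_re]

theorem gibbsZ_nonneg (β : ℝ) (H : Matrix n n ℂ) : 0 ≤ gibbsZ β H := by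
  by_cases hH : H.IsHermitian
  · rw [gibbsZ_eq_sum hH]
    exact Finset.sum_nonneg fun i _ => (Real.exp_pos _).le
  · simp [gibbsZ, matFun, hH]

theorem re_trace_mul_conj_gibbs (hH : H.IsHermitian) (β : ℝ) (U : Matrix n n ℂ) :
    ((H * (U * gibbs β H * star U)).trace).re = (gibbsZ β H)⁻¹ * ∑ i, ∑ j,
      hH.eigenvalues i *
        Complex.normSq
          ((star (hH.eigenvectorUnitary : Matrix n n ℂ) * U * hH.eigenvectorUnitary) i j) *
          Real.exp (-(β * hH.eigenvalues j)) := by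
  have hspec : H = hH.eigenvectorUnitary * diagonal (fun i => (hH.eigenvalues i : ℂ)) *
      star (hH.eigenvectorUnitary : Matrix n n ℂ) := by
    simpa [Unitary.conjStarAlgAut_apply, Function.comp_def] using hH.spectral_theorem
  conv_lhs => enter [1, 1, 1]; rw [hspec]
  rw [gibbs, matFun_eq_conj_diagonal hH, Matrix.mul_smul, Matrix.smul_mul, Matrix.mul_smul,
    trace_smul, trace_conj_mul_conj, trace_diagonal_mul_conj_diagonal, smul_eq_mul,
    ← Complex.ofReal_inv, ← Complex.ofReal_mul, Complex.ofReal_re]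

end Gibbs

/-- passivity of Gibbs states: no unitary can extract energy
from `τ_β`. -/
theorem gibbs_passive {d : ℕ}
    (H : Matrix (Fin d) (Fin d) ℂ) (hH : H.IsHermitian) (β : ℝ) (hβ : 0 < β)
    (U : Matrix (Fin d) (Fin d) ℂ) (hU : IsUnitaryMat U) :
    ((H * gibbs β H).trace).re ≤ ((H * (U * gibbs β H * star U)).trace).re := by
  have hV := hH.eigenvectorUnitary.2
  have hW : star (hH.eigenvectorUnitary : Matrix (Fin d) (Fin d) ℂ) * U * hH.eigenvectorUnitary ∈
      unitaryGroup (Fin d) ℂ :=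
    mul_mem (mul_mem (Unitary.star_mem hV) hU) hV
  have hτ : ((H * gibbs β H).trace).re =
      (gibbsZ β H)⁻¹ * ∑ j, hH.eigenvalues j * Real.exp (-(β * hH.eigenvalues j)) := by
    simpa [Unitary.star_mul_self_of_mem hV, one_apply, apply_ite Complex.normSq]
      using re_trace_mul_conj_gibbs hH β 1
  rw [hτ, re_trace_mul_conj_gibbs hH β U]
  exact mul_le_mul_of_nonneg_left
    (sum_mul_exp_le_of_mem_doublyStochastic (normSq_mem_doublyStochastic hW) _ hβ)
    (inv_nonneg.mpr (gibbsZ_nonneg β H))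
end
end
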